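/- arXiv:2602.08348 — 3 statements merged into one kernel-verified Lean document; each statement's English description precedes it below -/
import Mathlib

section
/- Let A be an algebra over ℂ, Δ : A → A ⊗ A an algebra homomorphism, R ∈ A ⊗ A invertible, v ∈ A a central invertible element satisfying the ribbon relation R₂₁ · R · Δ(v) = v ⊗ v, and w ∈ A a central invertible element with w² = v and R · Δ(w) = Δ(w)₂₁ · R. Then the Drinfeld coboundary element Ω := R · Δ(w) · (w ⊗ w)⁻¹ satisfies Ω₂₁ · Ω = 1 ⊗ 1. -/
open TensorProduct

noncomputable section

variable {A : Type*} [Ring A] [Algebra ℂ A]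

/-- The flip automorphism of `A ⊗ A`. -/
def tensorFlip (A : Type*) [Ring A] [Algebra ℂ A] : A ⊗[ℂ] A ≃ₐ[ℂ] A ⊗[ℂ] A :=
  Algebra.TensorProduct.comm ℂ A A

theorem drinfeld_coboundary_is_coboundary
    (Δ : A →ₐ[ℂ] A ⊗[ℂ] A)
    (R Rinv : A ⊗[ℂ] A) (hR1 : R * Rinv = 1) (hR2 : Rinv * R = 1)
    (v vinv : A) (hv1 : v * vinv = 1) (hv2 : vinv * v = 1)
    (hvcentral : ∀ a : A, v * a = a * v)
    (hribbon : tensorFlip A R * R * Δ v = v ⊗ₜ[ℂ] v)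
    (w winv : A) (hw1 : w * winv = 1) (hw2 : winv * w = 1)
    (hwcentral : ∀ a : A, w * a = a * w)
    (hwsq : w * w = v)
    (hwR : R * Δ w = tensorFlip A (Δ w) * R) :
    tensorFlip A (R * Δ w * (winv ⊗ₜ[ℂ] winv)) * (R * Δ w * (winv ⊗ₜ[ℂ] winv)) = 1 := by
  have hwinvc : ∀ a : A, winv * a = a * winv := by
    intro a
    calc winv * a = winv * (a * (w * winv)) := by rw [hw1, mul_one]
      _ = winv * (w * (a * winv)) := by rw [← mul_assoc a w, ← hwcentral a, mul_assoc]
      _ = (winv * w) * (a * winv) := (mul_assoc _ _ _).symm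
      _ = a * winv := by rw [hw2, one_mul]
  set W : A ⊗[ℂ] A := winv ⊗ₜ[ℂ] winv with hW
  have hcent : ∀ x : A ⊗[ℂ] A, W * x = x * W := by
    intro x
    induction x using TensorProduct.induction_on with
    | zero => simp
    | tmul a b =>
        simp only [hW, Algebra.TensorProduct.tmul_mul_tmul, hwinvc a, hwinvc b]
    | add x y hx hy => rw [mul_add, add_mul, hx, hy]
  have hFW : tensorFlip A W = W := by
    simp [hW, tensorFlip]
  have hvw : v * winv * winv = 1 := by
    rw [← hwsq, mul_assoc w w winv, hw1, mul_one, hw1]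
  calc tensorFlip A (R * Δ w * W) * (R * Δ w * W)
      = tensorFlip A R * tensorFlip A (Δ w) * W * (R * Δ w * W) := by
        rw [map_mul, map_mul, hFW]
    _ = tensorFlip A R * (tensorFlip A (Δ w) * (R * (Δ w * (W * W)))) := by
        simp only [mul_assoc]
        rw [hcent (R * (Δ w * W))]
        simp only [mul_assoc]
    _ = tensorFlip A R * (R * (Δ v * (W * W))) := by
        rw [← mul_assoc (tensorFlip A (Δ w)) R, ← hwR, mul_assoc R, ← mul_assoc (Δ w),
          ← map_mul, hwsq]
    _ = (v ⊗ₜ[ℂ] v) * (W * W) := by rw [← hribbon]; simp only [mul_assoc]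
    _ = 1 := by
        simp only [hW, Algebra.TensorProduct.tmul_mul_tmul, ← mul_assoc, hvw]
        exact Algebra.TensorProduct.one_def.symm
end
end

section
/- Let A be a *-algebra over ℂ, Δ : A → A ⊗ A an algebra homomorphism with Δ(a*) = (Δ(a)₂₁)* for all a, R ∈ A ⊗ A invertible with R* = (R₂₁)⁻¹, v ∈ A central invertible with R₂₁ · R · Δ(v) = v ⊗ v, and w ∈ A central with w* = w⁻¹, w² = v, and R · Δ(w) = Δ(w)₂₁ · R. Then the element Ω := R · Δ(w) · (w ⊗ w)⁻¹ is self-adjoint: Ω* = Ω. -/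
open TensorProduct

noncomputable section

variable {A : Type*} [Ring A] [Algebra ℂ A] [StarRing A] [StarModule ℂ A]

theorem drinfeld_coboundary_selfadjoint
    (starT : A ⊗[ℂ] A →+ A ⊗[ℂ] A)
    (hstarT : ∀ a b : A, starT (a ⊗ₜ[ℂ] b) = star a ⊗ₜ[ℂ] star b)
    (Δ : A →ₐ[ℂ] A ⊗[ℂ] A)
    (hΔstar : ∀ a : A, Δ (star a) = starT (tensorFlip A (Δ a)))
    (R Rinv : A ⊗[ℂ] A) (hR1 : R * Rinv = 1) (hR2 : Rinv * R = 1)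
    (hRstar : starT R = tensorFlip A Rinv)
    (v vinv : A) (hv1 : v * vinv = 1) (hv2 : vinv * v = 1)
    (hvcentral : ∀ a : A, v * a = a * v)
    (hribbon : tensorFlip A R * R * Δ v = v ⊗ₜ[ℂ] v)
    (w winv : A) (hw1 : w * winv = 1) (hw2 : winv * w = 1)
    (hwcentral : ∀ a : A, w * a = a * w)
    (hwstar : star w = winv) (hwsq : w * w = v)
    (hwR : R * Δ w = tensorFlip A (Δ w) * R) :
    starT (R * Δ w * (winv ⊗ₜ[ℂ] winv)) = R * Δ w * (winv ⊗ₜ[ℂ] winv) := by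
  -- starT is antimultiplicative
  have hanti : ∀ x y : A ⊗[ℂ] A, starT (x * y) = starT y * starT x := by
    intro x y
    induction x using TensorProduct.induction_on with
    | zero => simp
    | tmul a b =>
      induction y using TensorProduct.induction_on with
      | zero => simp
      | tmul c d => simp [Algebra.TensorProduct.tmul_mul_tmul, hstarT, star_mul]
      | add y1 y2 h1 h2 => simp [mul_add, add_mul, map_add, h1, h2]
    | add x1 x2 h1 h2 => simp [mul_add, add_mul, map_add, h1, h2]
  -- starT is involutive
  have hss : ∀ x : A ⊗[ℂ] A, starT (starT x) = x := by
    intro x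
    induction x using TensorProduct.induction_on with
    | zero => simp
    | tmul a b => simp [hstarT]
    | add x y hx hy => simp [map_add, hx, hy]
  -- flip is involutive
  have hFF : ∀ x : A ⊗[ℂ] A, tensorFlip A (tensorFlip A x) = x := by
    intro x
    induction x using TensorProduct.induction_on with
    | zero => simp
    | tmul a b => simp [tensorFlip]
    | add x y hx hy => simp [map_add, hx, hy]
  -- centrality of c ⊗ c for central c
  have hcentral : ∀ (c : A), (∀ a, c * a = a * c) →
      ∀ x : A ⊗[ℂ] A, (c ⊗ₜ[ℂ] c) * x = x * (c ⊗ₜ[ℂ] c) := by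
    intro c hc x
    induction x using TensorProduct.induction_on with
    | zero => simp
    | tmul a b => simp [Algebra.TensorProduct.tmul_mul_tmul, hc]
    | add x y hx hy => simp [mul_add, add_mul, hx, hy]
  -- winv is central
  have hwinvc : ∀ a : A, winv * a = a * winv := by
    intro a
    have hu : Commute ((⟨w, winv, hw1, hw2⟩ : Aˣ) : A) a := (hwcentral a)
    exact hu.units_inv_left
  -- star winv = w
  have hsinv : star winv = w := by rw [← hwstar, star_star]
  -- v * winv = w
  have hvwinv : v * winv = w := by rw [← hwsq, mul_assoc, hw1, mul_one]
  have hsΔw : starT (Δ w) = tensorFlip A (Δ winv) := by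
    have h := hΔstar winv
    rw [hsinv] at h
    rw [h, hss]
  have hsWW : starT (winv ⊗ₜ[ℂ] winv) = w ⊗ₜ[ℂ] w := by rw [hstarT, hsinv]
  have hvv : v ⊗ₜ[ℂ] v = R * tensorFlip A R * tensorFlip A (Δ v) := by
    have h := congrArg (tensorFlip A) hribbon
    rw [map_mul, map_mul, hFF] at h
    have hv : tensorFlip A (v ⊗ₜ[ℂ] v) = v ⊗ₜ[ℂ] v := by simp [tensorFlip]
    rw [hv] at h
    exact h.symm
  have hRΔwRinv : R * Δ w * Rinv = tensorFlip A (Δ w) := by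
    rw [hwR, mul_assoc, hR1, mul_one]
  have hΔvw : Δ v * Δ winv = Δ w := by rw [← map_mul, hvwinv]
  have key : (v ⊗ₜ[ℂ] v) * tensorFlip A (Δ winv * Rinv) = R * Δ w := by
    calc (v ⊗ₜ[ℂ] v) * tensorFlip A (Δ winv * Rinv)
        = R * tensorFlip A R * tensorFlip A (Δ v) *
            (tensorFlip A (Δ winv) * tensorFlip A Rinv) := by rw [hvv, map_mul]
      _ = R * tensorFlip A (R * (Δ v * Δ winv) * Rinv) := by
          simp only [map_mul, mul_assoc]
      _ = R * tensorFlip A (R * Δ w * Rinv) := by rw [hΔvw]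
      _ = R * tensorFlip A (tensorFlip A (Δ w)) := by rw [hRΔwRinv]
      _ = R * Δ w := by rw [hFF]
  calc starT (R * Δ w * (winv ⊗ₜ[ℂ] winv))
      = starT (winv ⊗ₜ[ℂ] winv) * (starT (Δ w) * starT R) := by rw [hanti, hanti]
    _ = (w ⊗ₜ[ℂ] w) * (tensorFlip A (Δ winv) * tensorFlip A Rinv) := by
        rw [hsWW, hsΔw, hRstar]
    _ = (w ⊗ₜ[ℂ] w) * tensorFlip A (Δ winv * Rinv) := by rw [map_mul]
    _ = ((v * winv) ⊗ₜ[ℂ] (v * winv)) * tensorFlip A (Δ winv * Rinv) := by rw [hvwinv]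
    _ = (v ⊗ₜ[ℂ] v) * ((winv ⊗ₜ[ℂ] winv) * tensorFlip A (Δ winv * Rinv)) := by
        rw [← Algebra.TensorProduct.tmul_mul_tmul, mul_assoc]
    _ = (v ⊗ₜ[ℂ] v) * (tensorFlip A (Δ winv * Rinv) * (winv ⊗ₜ[ℂ] winv)) := by
        rw [hcentral winv hwinvc]
    _ = R * Δ w * (winv ⊗ₜ[ℂ] winv) := by rw [← mul_assoc, key]
end
end

section
/- Let (A, Δ, ε, S) be a quasitriangular Hopf algebra over ℂ with R-matrix R = Σ aᵢ ⊗ bᵢ, and define the Drinfeld element u := Σ S(bᵢ) · aᵢ ∈ A. Then u is invertible and S²(x) = u · x · u⁻¹ for all x ∈ A; in particular the square of the antipode is an inner automorphism. -/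
open TensorProduct

noncomputable section

variable {A : Type*} [Ring A] [Algebra ℂ A]

/-- `ε ⊗ id : A ⊗ A → A`. -/
def epsId (A : Type*) [Ring A] [Algebra ℂ A] (ε : A →ₐ[ℂ] ℂ) : A ⊗[ℂ] A →ₐ[ℂ] A :=
  (Algebra.TensorProduct.lid ℂ A).toAlgHom.comp
    (Algebra.TensorProduct.map ε (AlgHom.id ℂ A))

/-- `id ⊗ ε : A ⊗ A → A`. -/
def idEps (A : Type*) [Ring A] [Algebra ℂ A] (ε : A →ₐ[ℂ] ℂ) : A ⊗[ℂ] A →ₐ[ℂ] A :=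
  (Algebra.TensorProduct.rid ℂ ℂ A).toAlgHom.comp
    (Algebra.TensorProduct.map (AlgHom.id ℂ A) ε)

def leg12 (A : Type*) [Ring A] [Algebra ℂ A] :
    A ⊗[ℂ] A →ₐ[ℂ] (A ⊗[ℂ] A) ⊗[ℂ] A :=
  Algebra.TensorProduct.includeLeft

def leg23 (A : Type*) [Ring A] [Algebra ℂ A] :
    A ⊗[ℂ] A →ₐ[ℂ] (A ⊗[ℂ] A) ⊗[ℂ] A :=
  ((Algebra.TensorProduct.assoc ℂ ℂ ℂ A A A).symm.toAlgHom).comp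
    (Algebra.TensorProduct.includeRight)

def leg13 (A : Type*) [Ring A] [Algebra ℂ A] :
    A ⊗[ℂ] A →ₐ[ℂ] (A ⊗[ℂ] A) ⊗[ℂ] A :=
  Algebra.TensorProduct.map
    (Algebra.TensorProduct.includeLeft : A →ₐ[ℂ] A ⊗[ℂ] A) (AlgHom.id ℂ A)

def deltaId (A : Type*) [Ring A] [Algebra ℂ A] (Δ : A →ₐ[ℂ] A ⊗[ℂ] A) :
    A ⊗[ℂ] A →ₐ[ℂ] (A ⊗[ℂ] A) ⊗[ℂ] A :=
  Algebra.TensorProduct.map Δ (AlgHom.id ℂ A)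

def idDelta (A : Type*) [Ring A] [Algebra ℂ A] (Δ : A →ₐ[ℂ] A ⊗[ℂ] A) :
    A ⊗[ℂ] A →ₐ[ℂ] (A ⊗[ℂ] A) ⊗[ℂ] A :=
  ((Algebra.TensorProduct.assoc ℂ ℂ ℂ A A A).symm.toAlgHom).comp
    (Algebra.TensorProduct.map (AlgHom.id ℂ A) Δ)

/-- The antipode axiom: `m ∘ (S ⊗ id) ∘ Δ = ε(·)1 = m ∘ (id ⊗ S) ∘ Δ`. -/
def IsAntipode (Δ : A →ₐ[ℂ] A ⊗[ℂ] A) (ε : A →ₐ[ℂ] ℂ) (S : A →ₗ[ℂ] A) : Prop :=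
  (∀ a : A, LinearMap.mul' ℂ A (TensorProduct.map S LinearMap.id (Δ a)) = algebraMap ℂ A (ε a)) ∧
  (∀ a : A, LinearMap.mul' ℂ A (TensorProduct.map LinearMap.id S (Δ a)) = algebraMap ℂ A (ε a))

/-!
For `R = Σ a ⊗ b` write `u = Σ S(b) a`, and `κ_c (y ⊗ z) = S(z) c y`, so that `u = κ_1 R` and,
`S` being anti-multiplicative, `κ_c (t r) = κ_{κ_c t} r`.

In the convolution algebra of linear maps `A → Aᵐᵒᵖ` one has `S ⋆ S² = 1`, while `(u ·) ⋆ S` is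
`x ↦ κ_1 (R Δx) = κ_1 (Δᵒᵖx R) = ε(x) u`; associativity gives `u x = S²(x) u`. For
`R⁻¹ = Σ c ⊗ d` this rule turns `1 = κ_1 (R R⁻¹) = Σ S(d) u c` into `w u = 1` with
`w = Σ S(d) S²(c)`. The hexagon axioms, contracted with `ε` and `S`, give `(S ⊗ id) R = R⁻¹` and
`(id ⊗ S) R⁻¹ = R`, hence `(S ⊗ S) R = R`, `S² u = u` and `u w = S²(w) u = S²(w u) = 1`.
-/

open Coalgebra HopfAlgebra WithConv

theorem IsIdempotentElem.eq_one_of_mul_eq_one {M : Type*} [Monoid M] {e f : M}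
    (he : IsIdempotentElem e) (hf : e * f = 1) : e = 1 :=
  calc e = e * e * f := by rw [mul_assoc, hf, mul_one]
    _ = 1 := by rw [he.eq, hf]

namespace HopfAlgebra

variable {K H : Type*} [CommRing K] [Ring H] [HopfAlgebra K H]

variable (K) in
def drinfeldMap : H →ₗ[K] H ⊗[K] H →ₗ[K] H where
  toFun c := LinearMap.mul' K H ∘ₗ map (antipode K) (LinearMap.mulLeft K c) ∘ₗ
    (TensorProduct.comm K H H).toLinearMap
  map_add' c d := by ext; simp [mul_add, add_mul]
  map_smul' k c := by ext; simp

@[simp]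
lemma drinfeldMap_tmul (c a b : H) : drinfeldMap K c (a ⊗ₜ b) = antipode K b * (c * a) := by
  simp [drinfeldMap]

lemma drinfeldMap_mul (c : H) (t r : H ⊗[K] H) :
    drinfeldMap K c (t * r) = drinfeldMap K (drinfeldMap K c t) r := by
  suffices drinfeldMap K c ∘ₗ LinearMap.mulRight K r =
      (drinfeldMap K).flip r ∘ₗ drinfeldMap K c from LinearMap.congr_fun this t
  ext y z
  suffices drinfeldMap K c ∘ₗ LinearMap.mulLeft K (y ⊗ₜ z) =
      drinfeldMap K (antipode K z * (c * y)) from LinearMap.congr_fun this r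
  ext a b
  simp [antipode_mul_antidistrib, mul_assoc]

lemma drinfeldMap_one_comm :
    drinfeldMap K (1 : H) ∘ₗ (TensorProduct.comm K H H).toLinearMap =
      LinearMap.mul' K H ∘ₗ (antipode K).rTensor H := by
  ext; simp

lemma drinfeldMap_comm_comul (x : H) :
    drinfeldMap K 1 (TensorProduct.comm K H H (comul x)) = algebraMap K H (counit x) := by
  simpa using congr($drinfeldMap_one_comm (comul x))

lemma drinfeldMap_eq_mul_of_forall_mul_eq (σ : H →ₗ[K] H) {c : H} (hc : ∀ x, c * x = σ x * c)
    (t : H ⊗[K] H) : drinfeldMap K c t = drinfeldMap K 1 (σ.rTensor H t) * c := by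
  suffices drinfeldMap K c = LinearMap.mulRight K c ∘ₗ drinfeldMap K 1 ∘ₗ σ.rTensor H from
    congr($this t)
  ext a b
  simp [hc, mul_assoc]

lemma antipode_antipode_drinfeldMap_one (t : H ⊗[K] H) :
    antipode K (antipode K (drinfeldMap K 1 t)) =
      drinfeldMap K 1 (map (antipode K ∘ₗ antipode K) (antipode K ∘ₗ antipode K) t) := by
  suffices antipode K ∘ₗ antipode K ∘ₗ drinfeldMap K (1 : H) =
      drinfeldMap K 1 ∘ₗ map (antipode K ∘ₗ antipode K) (antipode K ∘ₗ antipode K) from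
    congr($this t)
  ext a b
  simp [antipode_mul_antidistrib]

variable (K) in
def drinfeldElement (R : H ⊗[K] H) : H :=
  LinearMap.mul' K H (map (antipode K) LinearMap.id (TensorProduct.comm K H H R))

lemma drinfeldElement_eq_drinfeldMap_one (R : H ⊗[K] H) :
    drinfeldElement K R = drinfeldMap K 1 R := by
  have := congr($(drinfeldMap_one_comm (K := K) (H := H)) (TensorProduct.comm K H H R))
  rw [LinearMap.comp_apply, LinearEquiv.coe_coe, TensorProduct.comm_comm] at this
  exact this.symm

lemma antipodeAlgHomOp_convMul_comp_antipode :
    toConv (antipodeAlgHomOp K H).toLinearMap *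
      toConv ((antipodeAlgHomOp K H).toLinearMap ∘ₗ antipode K) = 1 := by
  have := LinearMap.algHom_comp_convMul_distrib (antipodeAlgHomOp K H) (toConv .id)
    (toConv (antipode K))
  rw [LinearMap.id_mul_antipode] at this
  ext x
  simpa using congr($this.symm x)

lemma mulLeft_convMul_antipodeAlgHomOp (c : H) :
    toConv ((MulOpposite.opLinearEquiv K).toLinearMap ∘ₗ LinearMap.mulLeft K c) *
        toConv (antipodeAlgHomOp K H).toLinearMap =
      toConv ((MulOpposite.opLinearEquiv K).toLinearMap ∘ₗ drinfeldMap K c ∘ₗ comul) := by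
  suffices LinearMap.mul' K Hᵐᵒᵖ ∘ₗ map ((MulOpposite.opLinearEquiv K).toLinearMap ∘ₗ
      LinearMap.mulLeft K c) (antipodeAlgHomOp K H).toLinearMap =
      (MulOpposite.opLinearEquiv K).toLinearMap ∘ₗ drinfeldMap K c by
    ext x
    exact congr($this (comul x))
  ext a b
  simp

theorem drinfeldElement_mul_eq_antipode_antipode_mul (R : H ⊗[K] H)
    (hcomm : ∀ x : H, R * comul x = TensorProduct.comm K H H (comul x) * R) (x : H) :
    drinfeldElement K R * x = antipode K (antipode K x) * drinfeldElement K R := by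
  rw [drinfeldElement_eq_drinfeldMap_one]
  set u := drinfeldMap K 1 R
  have hu : toConv ((MulOpposite.opLinearEquiv K).toLinearMap ∘ₗ drinfeldMap K u ∘ₗ comul) =
      MulOpposite.op u • (1 : WithConv (H →ₗ[K] Hᵐᵒᵖ)) := by
    ext y
    simp only [LinearMap.comp_apply, u, ← drinfeldMap_mul, hcomm]
    simp [drinfeldMap_mul, drinfeldMap_comm_comul, Algebra.algebraMap_eq_smul_one]
  have key := calc
    toConv ((MulOpposite.opLinearEquiv K).toLinearMap ∘ₗ LinearMap.mulLeft K u)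
      = toConv ((MulOpposite.opLinearEquiv K).toLinearMap ∘ₗ LinearMap.mulLeft K u) *
          (toConv (antipodeAlgHomOp K H).toLinearMap *
            toConv ((antipodeAlgHomOp K H).toLinearMap ∘ₗ antipode K)) := by
        rw [antipodeAlgHomOp_convMul_comp_antipode, mul_one]
    _ = MulOpposite.op u • toConv ((antipodeAlgHomOp K H).toLinearMap ∘ₗ antipode K) := by
        rw [← mul_assoc, mulLeft_convMul_antipodeAlgHomOp, hu, smul_mul_assoc, one_mul]
  simpa using congr(MulOpposite.unop ($key x))

theorem exists_inv_drinfeldElement_and_antipode_antipode_eq (R Rinv : H ⊗[K] H)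
    (hR : R * Rinv = 1)
    (hcomm : ∀ x : H, R * comul x = TensorProduct.comm K H H (comul x) * R)
    (hSS : map (antipode K) (antipode K) R = R) :
    ∃ w : H, drinfeldElement K R * w = 1 ∧ w * drinfeldElement K R = 1 ∧
      ∀ x, antipode K (antipode K x) = drinfeldElement K R * x * w := by
  have hu := drinfeldElement_mul_eq_antipode_antipode_mul R hcomm
  rw [drinfeldElement_eq_drinfeldMap_one] at hu ⊢
  set u := drinfeldMap K 1 R
  set w := drinfeldMap K 1 ((antipode K ∘ₗ antipode K).rTensor H Rinv)
  have hSS_u : antipode K (antipode K u) = u := by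
    rw [antipode_antipode_drinfeldMap_one, map_comp, LinearMap.comp_apply, hSS, hSS]
  have hwu : w * u = 1 := calc
    w * u = drinfeldMap K u Rinv := (drinfeldMap_eq_mul_of_forall_mul_eq _ hu Rinv).symm
    _ = 1 := by rw [← drinfeldMap_mul, hR, Algebra.TensorProduct.one_def]; simp
  have huw : u * w = 1 := calc
    u * w = antipode K (antipode K (w * u)) := by
      rw [hu, antipode_mul_antidistrib, antipode_mul_antidistrib, hSS_u]
    _ = 1 := by simp [hwu]
  refine ⟨w, huw, hwu, fun x => ?_⟩
  rw [hu, mul_assoc, huw, mul_one]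

end HopfAlgebra

abbrev hopfAlgebraOfIsAntipode (Δ : A →ₐ[ℂ] A ⊗[ℂ] A) (ε : A →ₐ[ℂ] ℂ) (S : A →ₗ[ℂ] A)
    (hcoassoc : ∀ a : A, deltaId A Δ (Δ a) = idDelta A Δ (Δ a))
    (hcounit1 : ∀ a : A, epsId A ε (Δ a) = a)
    (hcounit2 : ∀ a : A, idEps A ε (Δ a) = a)
    (hS : IsAntipode Δ ε S) : HopfAlgebra ℂ A where
  __ := Bialgebra.ofAlgHom Δ ε
    (AlgHom.ext fun a => by
      simpa [deltaId, idDelta] using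
        congr(Algebra.TensorProduct.assoc ℂ ℂ ℂ A A A $(hcoassoc a)))
    (AlgHom.ext fun a => (Algebra.TensorProduct.lid ℂ A).eq_symm_apply.mpr (hcounit1 a))
    (AlgHom.ext fun a => (Algebra.TensorProduct.rid ℂ ℂ A).eq_symm_apply.mpr (hcounit2 a))
  antipode := S
  mul_antipode_rTensor_comul := LinearMap.ext hS.1
  mul_antipode_lTensor_comul := LinearMap.ext hS.2

section RMatrix

variable {Δ : A →ₐ[ℂ] A ⊗[ℂ] A} {ε : A →ₐ[ℂ] ℂ} {S : A →ₗ[ℂ] A} {R Rinv : A ⊗[ℂ] A}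

/-- `ε ⊗ ε ⊗ id` takes all three factors of the hexagon identity to `(ε ⊗ id) R`, which is
therefore an idempotent with a right inverse. -/
lemma epsId_eq_one_of_hex (hcounit1 : ∀ a : A, epsId A ε (Δ a) = a) (hR : R * Rinv = 1)
    (hhex1 : deltaId A Δ R = leg13 A R * leg23 A R) : epsId A ε R = 1 := by
  let Φ := (epsId A ε).comp (Algebra.TensorProduct.map (epsId A ε) (AlgHom.id ℂ A))
  have hΔ : Φ.comp (deltaId A Δ) = epsId A ε :=
    Algebra.TensorProduct.ext' fun a b => by simp [Φ, deltaId, hcounit1]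
  have h13 : Φ.comp (leg13 A) = epsId A ε :=
    Algebra.TensorProduct.ext' fun a b => by simp [Φ, leg13, epsId]
  have h23 : Φ.comp (leg23 A) = epsId A ε :=
    Algebra.TensorProduct.ext' fun a b => by simp [Φ, leg23, epsId]
  have hidem : IsIdempotentElem (epsId A ε R) := by
    simpa [IsIdempotentElem, ← AlgHom.comp_apply, hΔ, h13, h23] using congr(Φ $hhex1).symm
  exact hidem.eq_one_of_mul_eq_one (f := epsId A ε Rinv) (by rw [← map_mul, hR, map_one])

lemma idEps_eq_one_of_hex (hcounit2 : ∀ a : A, idEps A ε (Δ a) = a) (hR : R * Rinv = 1)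
    (hhex2 : idDelta A Δ R = leg13 A R * leg12 A R) : idEps A ε R = 1 := by
  let Ψ := (idEps A ε).comp ((Algebra.TensorProduct.map (AlgHom.id ℂ A) (idEps A ε)).comp
    (Algebra.TensorProduct.assoc ℂ ℂ ℂ A A A).toAlgHom)
  have hΔ : Ψ.comp (idDelta A Δ) = idEps A ε :=
    Algebra.TensorProduct.ext' fun a b => by simp [Ψ, idDelta, hcounit2]
  have h13 : Ψ.comp (leg13 A) = idEps A ε :=
    Algebra.TensorProduct.ext' fun a b => by simp [Ψ, leg13, idEps]
  have h12 : Ψ.comp (leg12 A) = idEps A ε :=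
    Algebra.TensorProduct.ext' fun a b => by simp [Ψ, leg12, idEps]
  have hidem : IsIdempotentElem (idEps A ε R) := by
    simpa [IsIdempotentElem, ← AlgHom.comp_apply, hΔ, h13, h12] using congr(Ψ $hhex2).symm
  exact hidem.eq_one_of_mul_eq_one (f := idEps A ε Rinv) (by rw [← map_mul, hR, map_one])

lemma map_antipode_id_eq_inv (hS : IsAntipode Δ ε S) (hε : epsId A ε R = 1)
    (hR : R * Rinv = 1) (hhex1 : deltaId A Δ R = leg13 A R * leg23 A R) :
    TensorProduct.map S LinearMap.id R = Rinv := by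
  let κ := TensorProduct.map (LinearMap.mul' ℂ A ∘ₗ TensorProduct.map S LinearMap.id)
    (LinearMap.id : A →ₗ[ℂ] A)
  have hΔ : κ ∘ₗ (deltaId A Δ).toLinearMap =
      TensorProduct.mk ℂ A A 1 ∘ₗ (epsId A ε).toLinearMap := by
    ext a b
    simp [κ, deltaId, epsId, hS.1, Algebra.algebraMap_eq_smul_one, smul_tmul]
  have hleg : κ ∘ₗ LinearMap.mul' ℂ _ ∘ₗ
      TensorProduct.map (leg13 A).toLinearMap (leg23 A).toLinearMap =
      LinearMap.mul' ℂ _ ∘ₗ TensorProduct.map (TensorProduct.map S LinearMap.id) LinearMap.id := by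
    ext
    simp [κ, leg13, leg23]
  refine left_inv_eq_right_inv ?_ hR
  have := congr($hleg (R ⊗ₜ R))
  simp only [LinearMap.comp_apply, map_tmul, LinearMap.mul'_apply, AlgHom.toLinearMap_apply,
    LinearMap.id_apply] at this
  rw [← this, ← hhex1]
  simpa [hε, Algebra.TensorProduct.one_def] using congr($hΔ R)

lemma idDelta_inv_eq (hR1 : R * Rinv = 1) (hR2 : Rinv * R = 1)
    (hhex2 : idDelta A Δ R = leg13 A R * leg12 A R) :
    idDelta A Δ Rinv = leg12 A Rinv * leg13 A Rinv := by
  refine left_inv_eq_right_inv (a := idDelta A Δ R) ?_ ?_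
  · rw [← map_mul, hR2, map_one]
  rw [hhex2, mul_assoc, ← mul_assoc (leg12 A R), ← map_mul, hR1, map_one, one_mul, ← map_mul,
    hR1, map_one]

lemma map_id_antipode_inv_eq (hS : IsAntipode Δ ε S) (hε : idEps A ε R = 1)
    (hR1 : R * Rinv = 1) (hR2 : Rinv * R = 1) (hhex2 : idDelta A Δ R = leg13 A R * leg12 A R) :
    TensorProduct.map LinearMap.id S Rinv = R := by
  let κ := TensorProduct.map (LinearMap.id : A →ₗ[ℂ] A)
    (LinearMap.mul' ℂ A ∘ₗ TensorProduct.map LinearMap.id S) ∘ₗ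
    (Algebra.TensorProduct.assoc ℂ ℂ ℂ A A A).toLinearMap
  have hΔ : κ ∘ₗ (idDelta A Δ).toLinearMap =
      (TensorProduct.mk ℂ A A).flip 1 ∘ₗ (idEps A ε).toLinearMap := by
    ext a b
    simp [κ, idDelta, idEps, hS.2, Algebra.algebraMap_eq_smul_one]
  have hleg : κ ∘ₗ LinearMap.mul' ℂ _ ∘ₗ
      TensorProduct.map (leg12 A).toLinearMap (leg13 A).toLinearMap =
      LinearMap.mul' ℂ _ ∘ₗ
        TensorProduct.map LinearMap.id (TensorProduct.map LinearMap.id S) := by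
    ext
    simp [κ, leg12, leg13]
  have hεinv : idEps A ε Rinv = 1 := by
    simpa [hε] using congr(idEps A ε $hR1)
  refine (left_inv_eq_right_inv hR1 ?_).symm
  have := congr($hleg (Rinv ⊗ₜ Rinv))
  simp only [LinearMap.comp_apply, map_tmul, LinearMap.mul'_apply, AlgHom.toLinearMap_apply,
    LinearMap.id_apply] at this
  rw [← this, ← idDelta_inv_eq hR1 hR2 hhex2]
  simpa [hεinv, Algebra.TensorProduct.one_def] using congr($hΔ Rinv)

end RMatrix

theorem drinfeld_element_inner_square_antipode
    (Δ : A →ₐ[ℂ] A ⊗[ℂ] A) (ε : A →ₐ[ℂ] ℂ) (S : A →ₗ[ℂ] A)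
    (hcoassoc : ∀ a : A, deltaId A Δ (Δ a) = idDelta A Δ (Δ a))
    (hcounit1 : ∀ a : A, epsId A ε (Δ a) = a)
    (hcounit2 : ∀ a : A, idEps A ε (Δ a) = a)
    (hS : IsAntipode Δ ε S)
    (R Rinv : A ⊗[ℂ] A) (hR1 : R * Rinv = 1) (hR2 : Rinv * R = 1)
    (hint : ∀ a : A, R * Δ a = tensorFlip A (Δ a) * R)
    (hhex1 : deltaId A Δ R = leg13 A R * leg23 A R)
    (hhex2 : idDelta A Δ R = leg13 A R * leg12 A R) :
    ∃ uinv : A,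
      (LinearMap.mul' ℂ A (TensorProduct.map S LinearMap.id (tensorFlip A R))) * uinv = 1 ∧
      uinv * (LinearMap.mul' ℂ A (TensorProduct.map S LinearMap.id (tensorFlip A R))) = 1 ∧
      ∀ x : A, S (S x) =
        (LinearMap.mul' ℂ A (TensorProduct.map S LinearMap.id (tensorFlip A R))) * x * uinv := by
  let _ := hopfAlgebraOfIsAntipode Δ ε S hcoassoc hcounit1 hcounit2 hS
  have hSR : TensorProduct.map S LinearMap.id R = Rinv :=
    map_antipode_id_eq_inv hS (epsId_eq_one_of_hex hcounit1 hR1 hhex1) hR1 hhex1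
  have hSRinv : TensorProduct.map LinearMap.id S Rinv = R :=
    map_id_antipode_inv_eq hS (idEps_eq_one_of_hex hcounit2 hR1 hhex2) hR1 hR2 hhex2
  have hSS : TensorProduct.map S S R = R := calc
    _ = TensorProduct.map LinearMap.id S (TensorProduct.map S LinearMap.id R) := by
      rw [← LinearMap.comp_apply, ← TensorProduct.map_comp, LinearMap.id_comp,
        LinearMap.comp_id]
    _ = R := by rw [hSR, hSRinv]
  exact HopfAlgebra.exists_inv_drinfeldElement_and_antipode_antipode_eq R Rinv hR1 hint hSS
end
end
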